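/- Let r be a rational function of degree N, α ∈ Ω(r), C ∈ ℂ^{mN×M}, and A, B ∈ ℂ^{M×M} with det(A − α B) ≠ 0. Then the matrix-valued function M(z) = (Z_r(z) ⊗ I_m) C (A − r(z)B)^{−1} satisfies (R^{(r)}_α M)(z) = M(z) B (A − α B)^{−1}; in particular the column span of M is R^{(r)}_α-invariant. -/

import Mathlib

open Polynomial

noncomputable section

/-- The rational function `r = p/q`, evaluated pointwise. -/
def ratEval (p q : Polynomial ℂ) (z : ℂ) : ℂ := p.eval z / q.eval z

/-- The difference quotient `z ↦ (r(z) − r(a))/(z − a)` (equal to `r′(a)` at `z = a`). -/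
def dq (p q : Polynomial ℂ) (a : ℂ) : ℂ → ℂ :=
  fun z => if z = a then deriv (ratEval p q) a
           else (ratEval p q z - ratEval p q a) / (z - a)

/-- The state space `𝔏(r)`: the span of the difference quotients of `r = p/q`. -/
def stateSpace (p q : Polynomial ℂ) : Submodule ℂ (ℂ → ℂ) :=
  Submodule.span ℂ {f | ∃ a : ℂ, q.eval a ≠ 0 ∧ f = dq p q a}

/-- The generalized backward-shift operator `R^{(r)}_α`. -/
def Rop (p q : Polynomial ℂ) (α : ℂ) {N : ℕ} (w : Fin N → ℂ) (f : ℂ → ℂ) : ℂ → ℂ :=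
  fun z => f z / (ratEval p q z - α)
    - ∑ n : Fin N, f (w n) / (deriv (ratEval p q) (w n) * (z - w n))

/-- The Kronecker row `Z_r(z) ⊗ I_m`, an `m × (N·m)` matrix. -/
def ZrKron {N m : ℕ} (e : Fin N → (ℂ → ℂ)) (z : ℂ) :
    Matrix (Fin m) (Fin N × Fin m) ℂ :=
  Matrix.of fun i nk => if nk.2 = i then e nk.1 z else 0

/-!
`R^{(r)}_α` kills `𝔏(r)`: for a generator, `dq p q a = g_a / (q(z) q(a))` with `deg g_a < N`,
and `Rop (dq p q a) z = 0` is the partial-fraction expansion of `g_a / (p − αq)`, whose roots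
are the `N` distinct nodes `w_n`.  With `X(z) = A − r(z) B` and `Y = A − α B`, the resolvent
identity `X(z)⁻¹ − Y⁻¹ = (r(z) − α) X(z)⁻¹ B Y⁻¹` splits `M(z)` into `Z_r(z) C Y⁻¹`, whose
entries lie in `𝔏(r)`, plus `(r(z) − α) M(z) B Y⁻¹`, which vanishes at the nodes; so
`R^{(r)}_α` kills the first part and divides the second by `r(z) − α`.
-/

namespace Lagrange

variable {F : Type*} [Field F] {ι : Type*} {s : Finset ι} {v : ι → F}

theorem eq_C_mul_nodal_of_eval_eq_zero {P : F[X]} (hvs : Set.InjOn v s)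
    (hP : P.natDegree ≤ s.card) (hroot : ∀ i ∈ s, P.eval (v i) = 0) :
    P = C (P.coeff s.card) * nodal s v := by
  have hnodal : (nodal s v).natDegree = s.card := natDegree_nodal
  refine eq_of_degree_sub_lt_of_eval_index_eq s hvs ?_ fun i hi => ?_
  · refine (degree_lt_iff_coeff_zero _ _).mpr fun m hm => ?_
    rcases hm.eq_or_lt with heq | hlt
    · have hlead : (nodal s v).coeff s.card = 1 := hnodal ▸ nodal_monic.coeff_natDegree
      rw [← heq, coeff_sub, coeff_C_mul, hlead, mul_one, sub_self]
    · rw [coeff_sub, coeff_eq_zero_of_natDegree_lt (hP.trans_lt hlt),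
        coeff_eq_zero_of_natDegree_lt ((natDegree_C_mul_le _ _).trans_lt (hnodal ▸ hlt)), sub_zero]
  · rw [hroot i hi, eval_mul, eval_nodal_at_node hi, mul_zero]

theorem eval_div_eq_sum_of_eval_eq_zero [DecidableEq ι] {P g : F[X]} {x : F}
    (hvs : Set.InjOn v s) (hP : P.natDegree ≤ s.card) (hroot : ∀ i ∈ s, P.eval (v i) = 0)
    (hg : g.degree < s.card) (hx : P.eval x ≠ 0) :
    g.eval x / P.eval x
      = ∑ i ∈ s, g.eval (v i) / ((derivative P).eval (v i) * (x - v i)) := by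
  have hxv : ∀ i ∈ s, x ≠ v i := fun i hi h => hx (h ▸ hroot i hi)
  have hP' := eq_C_mul_nodal_of_eval_eq_zero hvs hP hroot
  set c := P.coeff s.card
  have hnodal : (nodal s v).eval x ≠ 0 := eval_nodal_not_at_node hxv
  have hgx : g.eval x
      = (nodal s v).eval x * ∑ i ∈ s, nodalWeight s v i * (x - v i)⁻¹ * g.eval (v i) := by
    conv_lhs => rw [eq_interpolate hvs hg]
    exact eval_interpolate_not_at_node _ hxv
  rw [hgx, hP', eval_mul, eval_C, mul_comm c, mul_div_mul_left _ _ hnodal, Finset.sum_div]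
  refine Finset.sum_congr rfl fun i hi => ?_
  rw [nodalWeight_eq_eval_derivative_nodal hi, derivative_C_mul, eval_mul, eval_C]
  field_simp

end Lagrange

section RationalFunction

variable {p q : ℂ[X]}

theorem ratEval_eq_of_eval_eq {α a : ℂ} (h : p.eval a = α * q.eval a) (ha : q.eval a ≠ 0) :
    ratEval p q a = α := by
  rw [ratEval, h, mul_div_cancel_right₀ _ ha]

theorem ratEval_sub_eq {α z : ℂ} (hz : q.eval z ≠ 0) :
    ratEval p q z - α = (p - C α * q).eval z / q.eval z := by
  rw [ratEval, eval_sub, eval_mul, eval_C, sub_div, mul_div_cancel_right₀ _ hz]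

theorem deriv_ratEval {a : ℂ} (ha : q.eval a ≠ 0) :
    deriv (ratEval p q) a = ((derivative p).eval a * q.eval a - p.eval a * (derivative q).eval a)
      / q.eval a ^ 2 :=
  ((p.hasDerivAt a).div (q.hasDerivAt a) ha).deriv

theorem deriv_ratEval_of_eval_eq {α a : ℂ} (h : p.eval a = α * q.eval a) (ha : q.eval a ≠ 0) :
    deriv (ratEval p q) a = (derivative (p - C α * q)).eval a / q.eval a := by
  rw [deriv_ratEval ha, derivative_sub, derivative_C_mul,
    eval_sub, eval_mul, eval_C, h]
  field_simp

def dqNum (p q : ℂ[X]) (a : ℂ) : ℂ[X] :=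
  (p * C (q.eval a) - C (p.eval a) * q) /ₘ (X - C a)

theorem dq_eq_eval_dqNum {a x : ℂ} (ha : q.eval a ≠ 0) (hx : q.eval x ≠ 0) :
    dq p q a x = (dqNum p q a).eval x / (q.eval x * q.eval a) := by
  have hfac : (X - C a) * dqNum p q a = p * C (q.eval a) - C (p.eval a) * q :=
    mul_divByMonic_eq_iff_isRoot.mpr (by simp [mul_comm])
  by_cases hxa : x = a
  · subst hxa
    have hval := congrArg (eval x ∘ derivative) hfac
    simp only [Function.comp_apply, derivative_mul, derivative_sub, derivative_X, derivative_C,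
      eval_add, eval_sub, eval_mul, eval_C, eval_X, sub_self, zero_mul,
      zero_add, mul_zero, add_zero, sub_zero, one_mul] at hval
    rw [dq, if_pos rfl, deriv_ratEval ha, hval, sq]
  · have hval := congrArg (eval x) hfac
    simp only [eval_mul, eval_sub, eval_X, eval_C] at hval
    rw [dq, if_neg hxa, ratEval, ratEval]
    have hxa' : x - a ≠ 0 := sub_ne_zero.mpr hxa
    field_simp
    linear_combination -hval

theorem degree_dqNum_lt (hdeg : q.natDegree ≤ p.natDegree) (a : ℂ) :
    (dqNum p q a).degree < p.natDegree := by
  set num := p * C (q.eval a) - C (p.eval a) * q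
  change (num /ₘ (X - C a)).degree < p.natDegree
  have hnum : num.natDegree ≤ p.natDegree :=
    (natDegree_sub_le _ _).trans <| max_le (natDegree_mul_C_le _ _)
      ((natDegree_C_mul_le _ _).trans hdeg)
  rcases eq_or_ne num 0 with h0 | h0
  · rw [h0, zero_divByMonic, degree_zero]
    exact WithBot.bot_lt_coe _
  · refine (degree_divByMonic_lt num _ h0 ?_).trans_le (degree_le_of_natDegree_le hnum)
    rw [degree_X_sub_C]
    exact one_pos

end RationalFunction

section BackwardShift

variable {p q : ℂ[X]} {α : ℂ} {N : ℕ} {w : Fin N → ℂ}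

variable (p q α w) in
def ropLinearMap : (ℂ → ℂ) →ₗ[ℂ] (ℂ → ℂ) where
  toFun := Rop p q α w
  map_add' f g := by
    funext z
    simp only [Rop, Pi.add_apply, add_div, Finset.sum_add_distrib]
    ring
  map_smul' c f := by
    funext z
    simp only [Rop, Pi.smul_apply, smul_eq_mul, mul_div_assoc, ← Finset.mul_sum,
      RingHom.id_apply]
    ring

theorem Rop_apply_of_eq_at_nodes {F G : ℂ → ℂ} (hFG : ∀ n, F (w n) = G (w n)) (z : ℂ) :
    Rop p q α w F z = Rop p q α w G z + (F z - G z) / (ratEval p q z - α) := by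
  simp only [Rop, hFG]
  ring

theorem Rop_dq_eq_zero (hN : p.natDegree = N) (hdeg : q.natDegree ≤ p.natDegree)
    (hw : Function.Injective w) (hroot : ∀ n, p.eval (w n) = α * q.eval (w n))
    (hq : ∀ n, q.eval (w n) ≠ 0) {z : ℂ} (hz : q.eval z ≠ 0) (hrz : ratEval p q z ≠ α)
    {a : ℂ} (ha : q.eval a ≠ 0) :
    Rop p q α w (dq p q a) z = 0 := by
  set s := p - C α * q
  have hs_root : ∀ n ∈ Finset.univ, s.eval (w n) = 0 := fun n _ => by
    simp [s, hroot n]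
  have hs_deg : s.natDegree ≤ (Finset.univ : Finset (Fin N)).card := by
    rw [Finset.card_univ, Fintype.card_fin, ← hN]
    exact (natDegree_sub_le _ _).trans (max_le le_rfl ((natDegree_C_mul_le _ _).trans hdeg))
  have hsq : s.eval z / q.eval z ≠ 0 := ratEval_sub_eq hz ▸ sub_ne_zero.mpr hrz
  have hsz : s.eval z ≠ 0 := (div_ne_zero_iff.mp hsq).1
  have hpf := Lagrange.eval_div_eq_sum_of_eval_eq_zero hw.injOn hs_deg hs_root
    (g := dqNum p q a) (by simpa [hN] using degree_dqNum_lt hdeg a) hsz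
  rw [Rop, sub_eq_zero, ratEval_sub_eq hz, dq_eq_eval_dqNum ha hz]
  have hlhs : (dqNum p q a).eval z / (q.eval z * q.eval a) / (s.eval z / q.eval z)
      = (dqNum p q a).eval z / s.eval z / q.eval a := by
    field_simp
  rw [hlhs, hpf, Finset.sum_div]
  refine Finset.sum_congr rfl fun n _ => ?_
  rw [dq_eq_eval_dqNum ha (hq n), deriv_ratEval_of_eval_eq (hroot n) (hq n)]
  have hqn := hq n
  field_simp
  ring

theorem Rop_eq_zero_of_mem_stateSpace (hN : p.natDegree = N) (hdeg : q.natDegree ≤ p.natDegree)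
    (hw : Function.Injective w) (hroot : ∀ n, p.eval (w n) = α * q.eval (w n))
    (hq : ∀ n, q.eval (w n) ≠ 0) {z : ℂ} (hz : q.eval z ≠ 0) (hrz : ratEval p q z ≠ α)
    {f : ℂ → ℂ} (hf : f ∈ stateSpace p q) :
    Rop p q α w f z = 0 := by
  have hle : stateSpace p q ≤ LinearMap.ker (LinearMap.proj z ∘ₗ ropLinearMap p q α w) := by
    refine Submodule.span_le.mpr ?_
    rintro _ ⟨a, ha, rfl⟩
    exact Rop_dq_eq_zero hN hdeg hw hroot hq hz hrz ha
  exact hle hf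

end BackwardShift

theorem ZrKron_mul_apply {N m K : ℕ} (e : Fin N → ℂ → ℂ) (ζ : ℂ)
    (D : Matrix (Fin N × Fin m) (Fin K) ℂ) (i : Fin m) (k : Fin K) :
    (ZrKron (m := m) e ζ * D) i k = ∑ n, e n ζ * D (n, i) k := by
  rw [Matrix.mul_apply, Fintype.sum_prod_type]
  refine Finset.sum_congr rfl fun n _ => ?_
  simp [ZrKron, ite_mul]

theorem ZrKron_mul_apply_mem_stateSpace {p q : ℂ[X]} {N m K : ℕ} {e : Fin N → ℂ → ℂ}
    (hmem : ∀ n, e n ∈ stateSpace p q) (D : Matrix (Fin N × Fin m) (Fin K) ℂ)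
    (i : Fin m) (k : Fin K) :
    (fun ζ => (ZrKron (m := m) e ζ * D) i k) ∈ stateSpace p q := by
  have h : (fun ζ => (ZrKron (m := m) e ζ * D) i k) = ∑ n, D (n, i) k • e n := by
    funext ζ
    simp [ZrKron_mul_apply, mul_comm]
  rw [h]
  exact Submodule.sum_mem _ fun n _ => Submodule.smul_mem _ _ (hmem n)

theorem Matrix.inv_sub_smul_sub_inv {n K : Type*} [Fintype n] [DecidableEq n] [CommRing K]
    (A B : Matrix n n K) {α β : K} (hα : IsUnit (A - α • B)) (hβ : IsUnit (A - β • B)) :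
    (A - β • B)⁻¹ - (A - α • B)⁻¹ = (β - α) • ((A - β • B)⁻¹ * B * (A - α • B)⁻¹) := by
  rw [Matrix.inv_sub_inv (iff_of_true hβ hα), sub_sub_sub_cancel_left, ← sub_smul,
    Matrix.mul_smul, Matrix.smul_mul]

theorem stmt15_general (p q : Polynomial ℂ) (N : ℕ)
    (hN : p.natDegree = N) (hdeg : q.natDegree ≤ p.natDegree)
    (e : Fin N → (ℂ → ℂ)) (hmem : ∀ n, e n ∈ stateSpace p q)
    (α : ℂ) (w : Fin N → ℂ) (hw : Function.Injective w)
    (hroot : ∀ n, p.eval (w n) = α * q.eval (w n)) (hq : ∀ n, q.eval (w n) ≠ 0)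
    (m M : ℕ) (C : Matrix (Fin N × Fin m) (Fin M) ℂ)
    (A B : Matrix (Fin M) (Fin M) ℂ) (hAB : (A - α • B).det ≠ 0) :
    ∀ z : ℂ, q.eval z ≠ 0 → ratEval p q z ≠ α →
      (A - ratEval p q z • B).det ≠ 0 →
      ∀ (i : Fin m) (k : Fin M),
        Rop p q α w
          (fun ζ => (ZrKron (m := m) e ζ * C * (A - ratEval p q ζ • B)⁻¹) i k) z
        = (ZrKron (m := m) e z * C * (A - ratEval p q z • B)⁻¹ * B * (A - α • B)⁻¹) i k := by
  intro z hz hrz hX i k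
  set Z := ZrKron (m := m) e z
  have hresolvent : Z * C * (A - ratEval p q z • B)⁻¹ - Z * C * (A - α • B)⁻¹
      = (ratEval p q z - α) • (Z * C * (A - ratEval p q z • B)⁻¹ * B * (A - α • B)⁻¹) := by
    rw [Matrix.mul_assoc, Matrix.mul_assoc, ← Matrix.mul_sub, ← Matrix.mul_sub,
      Matrix.inv_sub_smul_sub_inv A B ((Matrix.isUnit_iff_isUnit_det _).mpr hAB.isUnit)
        ((Matrix.isUnit_iff_isUnit_det _).mpr hX.isUnit)]
    simp only [Matrix.mul_smul, Matrix.mul_assoc]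
  have hnodes (n : Fin N) : ratEval p q (w n) = α := ratEval_eq_of_eval_eq (hroot n) (hq n)
  rw [Rop_apply_of_eq_at_nodes (G := fun ζ => (ZrKron (m := m) e ζ * (C * (A - α • B)⁻¹)) i k)
      (fun n => by simp only [hnodes n, Matrix.mul_assoc]),
    Rop_eq_zero_of_mem_stateSpace hN hdeg hw hroot hq hz hrz
      (ZrKron_mul_apply_mem_stateSpace hmem _ i k), zero_add, ← Matrix.mul_assoc,
    ← Matrix.sub_apply, hresolvent, Matrix.smul_apply, smul_eq_mul,
    mul_div_cancel_left₀ _ (sub_ne_zero.mpr hrz)]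

/-- `M(z) = (Z_r(z) ⊗ I_m) C (A − r(z)B)⁻¹` satisfies
`(R^{(r)}_α M)(z) = M(z) B (A − αB)⁻¹` entrywise; in particular the column
span of `M` is `R^{(r)}_α`-invariant. -/
theorem stmt15 (p q : Polynomial ℂ) (hco : IsCoprime p q) (N : ℕ)
    (hN : p.natDegree = N) (hdeg : q.natDegree ≤ p.natDegree)
    (e : Fin N → (ℂ → ℂ)) (hmem : ∀ n, e n ∈ stateSpace p q)
    (hli : LinearIndependent ℂ e)
    (hspan : Submodule.span ℂ (Set.range e) = stateSpace p q)
    (α : ℂ) (w : Fin N → ℂ) (hw : Function.Injective w)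
    (hroot : ∀ n, p.eval (w n) = α * q.eval (w n)) (hq : ∀ n, q.eval (w n) ≠ 0)
    (m M : ℕ) (C : Matrix (Fin N × Fin m) (Fin M) ℂ)
    (A B : Matrix (Fin M) (Fin M) ℂ) (hAB : (A - α • B).det ≠ 0) :
    ∀ z : ℂ, q.eval z ≠ 0 → ratEval p q z ≠ α →
      (A - ratEval p q z • B).det ≠ 0 →
      ∀ (i : Fin m) (k : Fin M),
        Rop p q α w
          (fun ζ => (ZrKron (m := m) e ζ * C * (A - ratEval p q ζ • B)⁻¹) i k) z
        = (ZrKron (m := m) e z * C * (A - ratEval p q z • B)⁻¹ * B * (A - α • B)⁻¹) i k :=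
  stmt15_general p q N hN hdeg e hmem α w hw hroot hq m M C A B hAB

end
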